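/- Define f(t) := (1/(2π)) ∫_{D₀} (1−|z|²)/|1−z·e^{it}|² ν₀(dz) for t ∈ [0,2π]. Then f is a nonnegative measurable function with ∫₀^{2π} f(t) dt < ∞, and for every integer n ≥ 0 one has ∫_D z^n ν(dz) = ∫₀^{2π} e^{int} f(t) dt + ∫_Γ w^n ν_Γ(dw). Equivalently, the finite measure F on [0,2π] given by the pushforward of ν_Γ under the parametrization e^{it} ↦ t plus the absolutely continuous part f(t) dt satisfies ∫₀^{2π} e^{int} F(dt) = ∫_D z^n ν(dz) for all integers n ≥ 0. -/

import Mathlib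

/-!
The kernel `(1 - |z|²) / |1 - z e^{it}|²` is the Poisson kernel `P_{z̄}(e^{it})`, so by
conjugation invariance `f(t) = (2π)⁻¹ ∫ P_w(e^{it}) ν₀(dw)` is the density of the balayage of `ν₀`
onto the unit circle. The Poisson integral formula for `ζ ↦ ζⁿ` gives
`∫₀^{2π} e^{int} P_w(e^{it}) dt = 2π wⁿ`; as the kernel is nonnegative with total mass `2π`,
Fubini applies and the `n`-th Fourier coefficient of `f` is `∫_{D₀} wⁿ ν(dw)`. Splitting
`D = D₀ ∪ Γ` finishes the proof.
-/

open MeasureTheory Set Complex Metric ComplexConjugate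

theorem poissonKernel_nonneg {c w z : ℂ} (h : ‖w - c‖ ≤ ‖z - c‖) : 0 ≤ poissonKernel c w z :=
  div_nonneg (sub_nonneg.2 (pow_le_pow_left₀ (norm_nonneg _) h 2)) (sq_nonneg _)

theorem continuous_poissonKernel_circleMap {c w : ℂ} {R : ℝ} (hw : w ∈ ball c R) :
    Continuous fun t => poissonKernel c w (circleMap c R t) := by
  simp_rw [poissonKernel_eq_re_herglotzRieszKernel]
  exact continuous_re.comp <| (continuousOn_herglotzRieszKernel_sphere hw).comp_continuous
    (continuous_circleMap c R) (circleMap_mem_sphere' c R)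

theorem measurable_poissonKernel_circleMap :
    Measurable fun p : ℝ × ℂ => poissonKernel 0 p.2 (circleMap 0 1 p.1) := by
  simp only [poissonKernel_def]
  fun_prop

theorem poissonKernel_conj_circleMap (z : ℂ) (t : ℝ) :
    poissonKernel 0 (conj z) (circleMap 0 1 t) = (1 - ‖z‖ ^ 2) / ‖1 - z * exp (t * I)‖ ^ 2 := by
  have he : ‖exp (t * I)‖ = 1 := norm_exp_ofReal_mul_I t
  have hmul : 1 - z * exp (t * I) = exp (t * I) * conj (exp (t * I) - conj z) := by
    rw [map_sub, conj_conj, mul_sub, mul_conj, normSq_eq_norm_sq, he]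
    push_cast
    ring
  have hden : ‖1 - z * exp (t * I)‖ = ‖exp (t * I) - conj z‖ := by
    rw [hmul, norm_mul, he, one_mul, RCLike.norm_conj]
  simp [poissonKernel_def, circleMap_zero, hden, he]

theorem integral_exp_mul_poissonKernel_circleMap {w : ℂ} (hw : w ∈ ball 0 1) (n : ℕ) :
    ∫ t in Ioc 0 (2 * Real.pi), exp (I * n * t) * (poissonKernel 0 w (circleMap 0 1 t) : ℂ) =
      2 * Real.pi * w ^ n := by
  have h :=
    ((differentiable_pow n).diffContOnCl (s := ball (0 : ℂ) 1)).circleAverage_poissonKernel_smul hw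
  rw [Real.circleAverage_def, intervalIntegral.integral_of_le Real.two_pi_pos.le] at h
  rw [← h, Complex.real_smul, ← mul_assoc, ← ofReal_ofNat, ← ofReal_mul, ← ofReal_mul,
    mul_inv_cancel₀ Real.two_pi_pos.ne', ofReal_one, one_mul]
  refine setIntegral_congr_fun measurableSet_Ioc fun t _ => ?_
  rw [Pi.smul_apply', real_smul, circleMap_zero, ofReal_one, one_mul, mul_comm, ← exp_nat_mul]
  ring_nf

theorem integral_poissonKernel_circleMap {w : ℂ} (hw : w ∈ ball 0 1) :
    ∫ t in Ioc 0 (2 * Real.pi), poissonKernel 0 w (circleMap 0 1 t) = 2 * Real.pi := by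
  apply ofReal_injective
  rw [← integral_complex_ofReal]
  simpa using integral_exp_mul_poissonKernel_circleMap hw 0

theorem poissonKernel_circleMap_nonneg {w : ℂ} (hw : w ∈ closedBall 0 1) (t : ℝ) :
    0 ≤ poissonKernel 0 w (circleMap 0 1 t) :=
  poissonKernel_nonneg (by simpa using hw)

section Balayage

noncomputable def balayageDensity (μ : Measure ℂ) (t : ℝ) : ℝ :=
  (2 * Real.pi)⁻¹ * ∫ w, poissonKernel 0 w (circleMap 0 1 t) ∂μ

variable {μ : Measure ℂ}

theorem measurable_balayageDensity [SFinite μ] : Measurable (balayageDensity μ) :=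
  measurable_poissonKernel_circleMap.stronglyMeasurable.integral_prod_right'.measurable.const_mul _

theorem balayageDensity_nonneg (hμ : ∀ᵐ w ∂μ, w ∈ closedBall (0 : ℂ) 1) (t : ℝ) :
    0 ≤ balayageDensity μ t :=
  mul_nonneg (by positivity)
    (integral_nonneg_of_ae (hμ.mono fun w hw => poissonKernel_circleMap_nonneg hw t))

variable [IsFiniteMeasure μ]

theorem integrable_poissonKernel_circleMap_prod (hμ : ∀ᵐ w ∂μ, w ∈ ball (0 : ℂ) 1) :
    Integrable (fun p : ℝ × ℂ => poissonKernel 0 p.2 (circleMap 0 1 p.1))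
      ((volume.restrict (Ioc 0 (2 * Real.pi))).prod μ) := by
  rw [integrable_prod_iff' measurable_poissonKernel_circleMap.aestronglyMeasurable]
  refine ⟨hμ.mono fun w hw => (continuous_poissonKernel_circleMap hw).integrableOn_Ioc,
    (integrable_const (2 * Real.pi)).congr (hμ.mono fun w hw => ?_)⟩
  simp_rw [Real.norm_of_nonneg (poissonKernel_circleMap_nonneg (ball_subset_closedBall hw) _)]
  exact (integral_poissonKernel_circleMap hw).symm

theorem integrableOn_balayageDensity (hμ : ∀ᵐ w ∂μ, w ∈ ball (0 : ℂ) 1) :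
    IntegrableOn (balayageDensity μ) (Ioc 0 (2 * Real.pi)) :=
  (integrable_poissonKernel_circleMap_prod hμ).integral_prod_left.const_mul _

theorem integral_exp_mul_balayageDensity (hμ : ∀ᵐ w ∂μ, w ∈ ball (0 : ℂ) 1) (n : ℕ) :
    ∫ t in Ioc 0 (2 * Real.pi), exp (I * n * t) * (balayageDensity μ t : ℂ) = ∫ w, w ^ n ∂μ := by
  have hint : Integrable (Function.uncurry fun (t : ℝ) w =>
      exp (I * n * t) * (poissonKernel 0 w (circleMap 0 1 t) : ℂ))
      ((volume.restrict (Ioc 0 (2 * Real.pi))).prod μ) :=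
    (integrable_poissonKernel_circleMap_prod hμ).ofReal.bdd_mul (c := 1) (by fun_prop)
      (ae_of_all _ fun p => by simp [norm_exp])
  calc
    _ = ∫ (t : ℝ) in Ioc 0 (2 * Real.pi), (2 * Real.pi : ℂ)⁻¹ * ∫ w,
        exp (I * n * t) * (poissonKernel 0 w (circleMap 0 1 t) : ℂ) ∂μ := by
      refine setIntegral_congr_fun measurableSet_Ioc fun t _ => ?_
      rw [balayageDensity, ofReal_mul, ← integral_complex_ofReal, mul_left_comm,
        ← integral_const_mul]
      push_cast
      rfl
    _ = (2 * Real.pi : ℂ)⁻¹ * ∫ (t : ℝ) in Ioc 0 (2 * Real.pi), ∫ w,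
        exp (I * n * t) * (poissonKernel 0 w (circleMap 0 1 t) : ℂ) ∂μ :=
      integral_const_mul _ _
    _ = (2 * Real.pi : ℂ)⁻¹ * ∫ w, (∫ (t : ℝ) in Ioc 0 (2 * Real.pi),
        exp (I * n * t) * (poissonKernel 0 w (circleMap 0 1 t) : ℂ)) ∂μ := by
      rw [integral_integral_swap hint]
    _ = (2 * Real.pi : ℂ)⁻¹ * ∫ w, (2 * Real.pi : ℂ) * w ^ n ∂μ := by
      rw [integral_congr_ae (hμ.mono fun w hw => integral_exp_mul_poissonKernel_circleMap hw n)]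
    _ = _ := by
      rw [integral_const_mul, inv_mul_cancel_left₀ (by exact_mod_cast Real.two_pi_pos.ne')]

end Balayage

theorem setIntegral_comp_conj {E : Type*} [NormedAddCommGroup E] [NormedSpace ℝ E]
    {ν : Measure ℂ} (hν : ∀ A : Set ℂ, MeasurableSet A → ν (conj ⁻¹' A) = ν A)
    {s : Set ℂ} (hs : conj ⁻¹' s = s) (g : ℂ → E) :
    ∫ z in s, g (conj z) ∂ν = ∫ z in s, g z ∂ν := by
  have hconj : MeasurePreserving conj ν ν :=
    ⟨continuous_conj.measurable, Measure.ext fun A hA =>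
      (Measure.map_apply continuous_conj.measurable hA).trans (hν A hA)⟩
  simpa only [hs] using hconj.setIntegral_preimage_emb conjCLE.toHomeomorph.measurableEmbedding g s

theorem setIntegral_norm_le_eq_add {E F : Type*} [NormedAddCommGroup E] [NormedSpace ℝ E]
    [NormedAddCommGroup F] [ProperSpace F] [MeasurableSpace F] [OpensMeasurableSpace F]
    {ν : Measure F} [IsFiniteMeasure ν] {g : F → E} (hg : Continuous g) (r : ℝ) :
    ∫ z in {z | ‖z‖ ≤ r}, g z ∂ν =
      ∫ z in {z | ‖z‖ < r}, g z ∂ν + ∫ z in {z | ‖z‖ = r}, g z ∂ν := by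
  have hint : IntegrableOn g {z | ‖z‖ ≤ r} ν := by
    simpa [closedBall, dist_eq_norm] using
      hg.continuousOn.integrableOn_compact (μ := ν) (isCompact_closedBall 0 r)
  have hunion : {z : F | ‖z‖ ≤ r} = {z | ‖z‖ < r} ∪ {z | ‖z‖ = r} := by
    ext z
    simp [le_iff_lt_or_eq]
  have hdisj : Disjoint {z : F | ‖z‖ < r} {z | ‖z‖ = r} :=
    Set.disjoint_left.2 fun _ h₁ h₂ => ne_of_lt h₁ h₂
  rw [hunion, setIntegral_union hdisj
    (isClosed_eq continuous_norm continuous_const).measurableSet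
    (hint.mono_set (hunion ▸ subset_union_left)) (hint.mono_set (hunion ▸ subset_union_right))]

theorem representation_lemma_normal_spectral_density
    (ν : Measure ℂ) [IsFiniteMeasure ν]
    (hconj : ∀ A : Set ℂ, MeasurableSet A → ν ((starRingEnd ℂ) ⁻¹' A) = ν A)
    (f : ℝ → ℝ)
    (hf : ∀ t : ℝ, f t = (1 / (2 * Real.pi)) *
      ∫ z in {z : ℂ | ‖z‖ < 1},
        (1 - ‖z‖ ^ 2) / ‖1 - z * Complex.exp (t * Complex.I)‖ ^ 2 ∂ν) :
    Measurable f ∧ (∀ t : ℝ, 0 ≤ f t) ∧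
    IntegrableOn f (Set.Ioc 0 (2 * Real.pi)) ∧
    ∀ n : ℕ,
      (∫ z in {z : ℂ | ‖z‖ ≤ 1}, z ^ n ∂ν) =
        (∫ t in (0:ℝ)..(2 * Real.pi), Complex.exp (Complex.I * n * t) * (f t : ℂ)) +
          ∫ w in {w : ℂ | ‖w‖ = 1}, w ^ n ∂ν := by
  set μ := ν.restrict {z : ℂ | ‖z‖ < 1}
  have hμ : ∀ᵐ w ∂μ, w ∈ ball (0 : ℂ) 1 :=
    ae_restrict_of_forall_mem (measurableSet_lt measurable_norm measurable_const)
      fun w hw => mem_ball_zero_iff.2 hw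
  obtain rfl : f = balayageDensity μ := by
    ext t
    simp_rw [hf, ← poissonKernel_conj_circleMap, balayageDensity, one_div]
    rw [setIntegral_comp_conj hconj (by ext; simp) fun w => poissonKernel 0 w (circleMap 0 1 t)]
  refine ⟨measurable_balayageDensity,
    balayageDensity_nonneg (hμ.mono fun _ hw => ball_subset_closedBall hw),
    integrableOn_balayageDensity hμ, fun n => ?_⟩
  rw [setIntegral_norm_le_eq_add (continuous_pow n), intervalIntegral.integral_of_le
    Real.two_pi_pos.le, integral_exp_mul_balayageDensity hμ]
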